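/- Let p be an odd prime. The sequence {S_{F_p}(σ_{n,2})}_{n≥2} of exponential sums over F_p of the elementary symmetric polynomials of degree 2 satisfies the homogeneous linear recurrence with characteristic polynomial X^{2p} − ((−1)/p)·p^p; that is, S_{F_p}(σ_{n,2}) = ((−1)/p)·p^p · S_{F_p}(σ_{n−2p,2}) for all n ≥ 2p + 2, where ((−1)/p) is the Legendre symbol. -/
import Mathlib

set_option maxHeartbeats 1600000

open Finset

/-- The exponential sum over `F_p` of a function `G : F_pⁿ → F_p`:
`S_{F_p}(G) = ∑_{x ∈ F_pⁿ} e^{(2πi/p)·G(x)}`. -/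
noncomputable def expSumP (p : ℕ) [NeZero p] (n : ℕ) (G : (Fin n → ZMod p) → ZMod p) : ℂ :=
  ∑ x : Fin n → ZMod p, Complex.exp (2 * Real.pi * Complex.I * ((G x).val : ℂ) / p)

/-- The elementary symmetric polynomial of degree 2 in `n` variables,
`σ_{n,2} = ∑_{1 ≤ i < j ≤ n} X_i X_j`, as a function `F_pⁿ → F_p`. -/
def esym2 (p n : ℕ) (x : Fin n → ZMod p) : ZMod p :=
  ∑ s ∈ Finset.powersetCard 2 (Finset.univ : Finset (Fin n)), ∏ i ∈ s, x i

namespace Esym2Recurrence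

noncomputable def ψp (p : ℕ) [NeZero p] : AddChar (ZMod p) ℂ := ZMod.stdAddChar

noncomputable def χp (p : ℕ) [Fact p.Prime] : MulChar (ZMod p) ℂ :=
  (quadraticChar (ZMod p)).ringHomComp (Int.castRingHom ℂ)

variable {p : ℕ} [Fact p.Prime]

theorem expSum_eq (n : ℕ) (G : (Fin n → ZMod p) → ZMod p) :
    expSumP p n G = ∑ x : Fin n → ZMod p, ψp p (G x) := by
  refine Finset.sum_congr rfl fun x _ => ?_
  have h2 : ((((G x).val : ℤ)) : ZMod p) = G x := by push_cast; exact ZMod.natCast_zmod_val _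
  conv_rhs => rw [ψp, ← h2, ZMod.stdAddChar_coe]
  push_cast
  ring_nf

theorem orth (a : ZMod p) : ∑ x : ZMod p, ψp p (a * x) = if a = 0 then (p : ℂ) else 0 := by
  split_ifs with h
  · simp [h, ZMod.card]
  · have h1 : AddChar.mulShift (ψp p) a ≠ 0 := ZMod.isPrimitive_stdAddChar p h
    calc ∑ x : ZMod p, ψp p (a * x) = ∑ x : ZMod p, AddChar.mulShift (ψp p) a x := by
          simp [AddChar.mulShift_apply]
      _ = 0 := AddChar.sum_eq_zero_iff_ne_zero.2 h1


theorem two_esym2 {n : ℕ} (x : Fin n → ZMod p) :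
    (∑ i, x i) ^ 2 = (∑ i, x i ^ 2) + 2 * esym2 p n x := by
  classical
  have h1 : (∑ i, x i) ^ 2 = ∑ q ∈ (univ : Finset (Fin n)) ×ˢ univ, x q.1 * x q.2 := by
    rw [sq, Fintype.sum_mul_sum, ← Finset.sum_product']
  have h2 : (univ : Finset (Fin n)) ×ˢ univ = univ.diag ∪ univ.offDiag :=
    (Finset.diag_union_offDiag _).symm
  have h3 : ∑ q ∈ (univ : Finset (Fin n)).diag, x q.1 * x q.2 = ∑ i, x i ^ 2 := by
    rw [Finset.sum_diag]
    exact Finset.sum_congr rfl fun i _ => (sq (x i)).symm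
  have h4 : ∑ q ∈ (univ : Finset (Fin n)).offDiag, x q.1 * x q.2 = 2 * esym2 p n x := by
    rw [esym2, Finset.mul_sum,
      ← Finset.sum_fiberwise_of_maps_to (g := fun q : Fin n × Fin n => ({q.1, q.2} : Finset (Fin n)))
        (fun q hq => by
          rw [Finset.mem_powersetCard]
          exact ⟨Finset.subset_univ _, Finset.card_pair (Finset.mem_offDiag.1 hq).2.2⟩)]
    refine Finset.sum_congr rfl fun s hs => ?_
    obtain ⟨i, j, hij, rfl⟩ := Finset.card_eq_two.1 (Finset.mem_powersetCard.1 hs).2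
    have hfib : (univ : Finset (Fin n)).offDiag.filter
        (fun q : Fin n × Fin n => ({q.1, q.2} : Finset (Fin n)) = {i, j}) =
        {(i, j), (j, i)} := by
      ext ⟨a, b⟩
      simp only [Finset.mem_filter, Finset.mem_offDiag, Finset.mem_univ, true_and,
        Finset.mem_insert, Finset.mem_singleton, Prod.mk.injEq]
      constructor
      · rintro ⟨hab, hset⟩
        have ha : a ∈ ({i, j} : Finset (Fin n)) := hset ▸ Finset.mem_insert_self a {b}
        have hb : b ∈ ({i, j} : Finset (Fin n)) := hset ▸ (by simp)
        simp only [Finset.mem_insert, Finset.mem_singleton] at ha hb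
        rcases ha with rfl | rfl
        · rcases hb with rfl | rfl
          · exact absurd rfl hab
          · exact Or.inl ⟨rfl, rfl⟩
        · rcases hb with rfl | rfl
          · exact Or.inr ⟨rfl, rfl⟩
          · exact absurd rfl hab
      · rintro (⟨rfl, rfl⟩ | ⟨rfl, rfl⟩)
        · exact ⟨hij, rfl⟩
        · exact ⟨hij.symm, by rw [Finset.pair_comm]⟩
    rw [hfib, Finset.sum_pair (by simp [hij, Prod.ext_iff] : ((i, j) : Fin n × Fin n) ≠ (j, i)),
      Finset.prod_pair hij]
    ring
  rw [h1, h2, Finset.sum_union (Finset.disjoint_diag_offDiag _), h3, h4]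

theorem ringChar_ne_two (hp2 : p ≠ 2) : ringChar (ZMod p) ≠ 2 := by
  rw [ZMod.ringChar_zmod_n]; exact hp2

theorem chi_ne_one (hp2 : p ≠ 2) : χp p ≠ 1 :=
  (MulChar.ringHomComp_ne_one_iff (RingHom.injective_int _)).2
    (quadraticChar_ne_one (ringChar_ne_two hp2))

theorem gauss_sq (hp2 : p ≠ 2) :
    gaussSum (χp p) (ψp p) ^ 2 = χp p (-1) * p := by
  have := gaussSum_sq (chi_ne_one hp2) ((quadraticChar_isQuadratic (ZMod p)).comp _)
    (ZMod.isPrimitive_stdAddChar p)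
  rwa [ZMod.card] at this

theorem sum_psi_sq (hp2 : p ≠ 2) {c : ZMod p} (hc : c ≠ 0) :
    ∑ y : ZMod p, ψp p (c * y ^ 2) = χp p c * gaussSum (χp p) (ψp p) := by
  classical
  have step1 : ∑ y : ZMod p, ψp p (c * y ^ 2)
      = ∑ b ∈ (univ : Finset (ZMod p)).image (fun y => y ^ 2),
          (univ.filter fun y : ZMod p => y ^ 2 = b).card • ψp p (c * b) :=
    Finset.sum_comp (fun b => ψp p (c * b)) (fun y => y ^ 2)
  have step2 : ∑ b ∈ (univ : Finset (ZMod p)).image (fun y => y ^ 2),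
          (univ.filter fun y : ZMod p => y ^ 2 = b).card • ψp p (c * b)
      = ∑ b : ZMod p, (univ.filter fun y : ZMod p => y ^ 2 = b).card • ψp p (c * b) := by
    refine Finset.sum_subset (Finset.subset_univ _) fun b _ hb => ?_
    have : (univ.filter fun y : ZMod p => y ^ 2 = b) = ∅ := by
      rw [Finset.filter_eq_empty_iff]
      intro y _ hy
      exact hb (Finset.mem_image.2 ⟨y, Finset.mem_univ y, hy⟩)
    rw [this]; simp
  have card_eq : ∀ b : ZMod p,
      (((univ.filter fun y : ZMod p => y ^ 2 = b).card : ℤ) : ℂ) = χp p b + 1 := by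
    intro b
    have := quadraticChar_card_sqrts (ringChar_ne_two hp2) b
    rw [Set.toFinset_card] at this
    have hcard : (univ.filter fun y : ZMod p => y ^ 2 = b).card
        = Fintype.card {x : ZMod p | x ^ 2 = b} := by
      rw [Fintype.card_subtype]
      simp [Set.mem_setOf_eq]
    rw [hcard, this]
    push_cast [χp, MulChar.ringHomComp_apply]
    simp [eq_intCast]
  have chisq : χp p c * χp p c = 1 := by
    have h := quadraticChar_sq_one hc
    have : ((quadraticChar (ZMod p) c : ℤ) : ℂ) * ((quadraticChar (ZMod p) c : ℤ) : ℂ) = 1 := by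
      rw [← Int.cast_mul, ← sq, h]; norm_num
    simpa [χp, MulChar.ringHomComp_apply, eq_intCast] using this
  have hms : gaussSum (χp p) (AddChar.mulShift (ψp p) c) = χp p c * gaussSum (χp p) (ψp p) := by
    have h := gaussSum_mulShift (χp p) (ψp p) (Units.mk0 c hc)
    have h2 := congrArg (fun z => χp p c * z) h.symm
    have h3 : (χp p) c * gaussSum (χp p) (ψp p) = gaussSum (χp p) (AddChar.mulShift (ψp p) c) := by
      simpa [← mul_assoc, chisq, Units.val_mk0] using h2
    exact h3.symm
  calc ∑ y : ZMod p, ψp p (c * y ^ 2)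
      = ∑ b : ZMod p, (univ.filter fun y : ZMod p => y ^ 2 = b).card • ψp p (c * b) := by
        rw [step1, step2]
    _ = ∑ b : ZMod p, (χp p b + 1) * ψp p (c * b) := by
        refine Finset.sum_congr rfl fun b _ => ?_
        rw [nsmul_eq_mul, ← card_eq b]
        push_cast
        ring
    _ = (∑ b : ZMod p, χp p b * ψp p (c * b)) + ∑ b : ZMod p, ψp p (c * b) := by
        rw [← Finset.sum_add_distrib]
        exact Finset.sum_congr rfl fun b _ => by ring
    _ = gaussSum (χp p) (AddChar.mulShift (ψp p) c) + 0 := by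
        rw [orth c, if_neg hc, gaussSum]
        simp [AddChar.mulShift_apply]
    _ = χp p c * gaussSum (χp p) (ψp p) := by rw [hms, add_zero]

theorem psi_sum {ι : Type*} (s : Finset ι) (f : ι → ZMod p) :
    ψp p (∑ i ∈ s, f i) = ∏ i ∈ s, ψp p (f i) := by
  classical
  induction s using Finset.cons_induction with
  | empty => simp
  | cons a s ha ih => rw [Finset.sum_cons, Finset.prod_cons, AddChar.map_add_eq_mul, ih]

theorem master (hp2 : p ≠ 2) (n : ℕ) :
    (p : ℂ) * ∑ x : Fin n → ZMod p, ψp p (esym2 p n x) =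
      (∑ y : ZMod p, ψp p (-(2 : ZMod p)⁻¹ * y ^ 2)) ^ n *
      (∑ t : ZMod p, ψp p ((2 : ZMod p)⁻¹ * t ^ 2)) *
      (∑ u : ZMod p, ψp p (((n : ZMod p) - 1) * (2 : ZMod p)⁻¹ * u ^ 2)) := by
  classical
  set h : ZMod p := (2 : ZMod p)⁻¹ with hh
  have htwo : (2 : ZMod p) ≠ 0 :=
    Ring.two_ne_zero (by rw [ZMod.ringChar_zmod_n]; exact hp2)
  have h21 : h * 2 = 1 := inv_mul_cancel₀ htwo
  set G : ℂ := ∑ y : ZMod p, ψp p (-h * y ^ 2) with hG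
  set G' : ℂ := ∑ t : ZMod p, ψp p (h * t ^ 2) with hG'
  -- esym2 in terms of power sums
  have esym2_eq : ∀ x : Fin n → ZMod p,
      esym2 p n x = h * (∑ i, x i) ^ 2 - h * ∑ i, x i ^ 2 := by
    intro x
    have := two_esym2 (p := p) x
    have h3 : 2 * esym2 p n x = (∑ i, x i) ^ 2 - ∑ i, x i ^ 2 := by
      rw [this]; ring
    calc esym2 p n x = h * (2 * esym2 p n x) := by rw [← mul_assoc, h21, one_mul]
      _ = h * (∑ i, x i) ^ 2 - h * ∑ i, x i ^ 2 := by rw [h3]; ring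
  -- Step 1 : key1
  have key1 : ∀ x : Fin n → ZMod p,
      (p : ℂ) * ψp p (esym2 p n x) =
        ∑ t : ZMod p, ∑ u : ZMod p,
          ψp p ((h * t ^ 2 - h * ∑ i, x i ^ 2) + ((∑ i, x i) - t) * u) := by
    intro x
    have inner : ∀ t : ZMod p,
        ∑ u : ZMod p, ψp p ((h * t ^ 2 - h * ∑ i, x i ^ 2) + ((∑ i, x i) - t) * u)
          = ψp p (h * t ^ 2 - h * ∑ i, x i ^ 2) *
              (if (∑ i, x i) - t = 0 then (p : ℂ) else 0) := by
      intro t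
      calc ∑ u : ZMod p, ψp p ((h * t ^ 2 - h * ∑ i, x i ^ 2) + ((∑ i, x i) - t) * u)
          = ∑ u : ZMod p, ψp p (h * t ^ 2 - h * ∑ i, x i ^ 2) * ψp p (((∑ i, x i) - t) * u) :=
            Finset.sum_congr rfl fun u _ => (AddChar.map_add_eq_mul _ _ _)
        _ = ψp p (h * t ^ 2 - h * ∑ i, x i ^ 2) * ∑ u : ZMod p, ψp p (((∑ i, x i) - t) * u) :=
            (Finset.mul_sum _ _ _).symm
        _ = _ := by rw [orth]
    calc (p : ℂ) * ψp p (esym2 p n x)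
        = ∑ t : ZMod p, if t = (∑ i, x i) then
            ψp p (h * t ^ 2 - h * ∑ i, x i ^ 2) * (p : ℂ) else 0 := by
          rw [Finset.sum_ite_eq' univ (∑ i, x i)
            (fun t => ψp p (h * t ^ 2 - h * ∑ i, x i ^ 2) * (p : ℂ)), if_pos (mem_univ _)]
          rw [esym2_eq x, mul_comm]
      _ = ∑ t : ZMod p, ∑ u : ZMod p,
            ψp p ((h * t ^ 2 - h * ∑ i, x i ^ 2) + ((∑ i, x i) - t) * u) := by
          refine Finset.sum_congr rfl fun t _ => ?_
          rw [inner t]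
          by_cases ht : t = (∑ i, x i)
          · rw [if_pos ht, if_pos (by rw [ht, sub_self])]
          · rw [if_neg ht, if_neg (fun hc => ht (by linear_combination -hc)), mul_zero]
  -- the one-variable Gauss-type sum W(u)
  have W : ∀ u : ZMod p, ∑ y : ZMod p, ψp p (u * y - h * y ^ 2) = ψp p (h * u ^ 2) * G := by
    intro u
    have harg : ∀ y : ZMod p, u * y - h * y ^ 2 = h * u ^ 2 + (-h * (y - u) ^ 2) := by
      intro y; linear_combination (-(u * y)) * h21
    calc ∑ y : ZMod p, ψp p (u * y - h * y ^ 2)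
        = ∑ y : ZMod p, ψp p (h * u ^ 2) * ψp p (-h * (y - u) ^ 2) := by
          refine Finset.sum_congr rfl fun y _ => ?_
          rw [harg y, AddChar.map_add_eq_mul]
      _ = ψp p (h * u ^ 2) * ∑ y : ZMod p, ψp p (-h * (y - u) ^ 2) := (Finset.mul_sum _ _ _).symm
      _ = ψp p (h * u ^ 2) * G := by
          rw [hG]
          congr 1
          exact Fintype.sum_equiv (Equiv.subRight u) _ _ fun y => rfl
  -- sum over x at fixed t, u
  have inner_x : ∀ t u : ZMod p,
      ∑ x : Fin n → ZMod p, ψp p ((h * t ^ 2 - h * ∑ i, x i ^ 2) + ((∑ i, x i) - t) * u)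
        = ψp p (h * t ^ 2 - t * u) * (ψp p (h * u ^ 2) * G) ^ n := by
    intro t u
    calc ∑ x : Fin n → ZMod p, ψp p ((h * t ^ 2 - h * ∑ i, x i ^ 2) + ((∑ i, x i) - t) * u)
        = ∑ x : Fin n → ZMod p, ψp p (h * t ^ 2 - t * u) * ∏ i, ψp p (u * x i - h * (x i) ^ 2) := by
          refine Finset.sum_congr rfl fun x _ => ?_
          have harg : (h * t ^ 2 - h * ∑ i, x i ^ 2) + ((∑ i, x i) - t) * u
              = (h * t ^ 2 - t * u) + ∑ i, (u * x i - h * (x i) ^ 2) := by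
            rw [Finset.sum_sub_distrib, ← Finset.mul_sum, ← Finset.mul_sum]
            ring
          rw [harg, AddChar.map_add_eq_mul, psi_sum]
      _ = ψp p (h * t ^ 2 - t * u) * ∑ x : Fin n → ZMod p, ∏ i, ψp p (u * x i - h * (x i) ^ 2) :=
          (Finset.mul_sum _ _ _).symm
      _ = ψp p (h * t ^ 2 - t * u) * (ψp p (h * u ^ 2) * G) ^ n := by
          congr 1
          rw [← Fintype.piFinset_univ,
            Finset.sum_prod_piFinset univ (fun (_ : Fin n) (y : ZMod p) => ψp p (u * y - h * y ^ 2))]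
          simp only [W u]
          rw [Finset.prod_const, Finset.card_univ, Fintype.card_fin]
  -- sum over t at fixed u
  have inner_t : ∀ u : ZMod p,
      ∑ t : ZMod p, ψp p (h * t ^ 2 - t * u) = ψp p (-h * u ^ 2) * G' := by
    intro u
    have harg : ∀ t : ZMod p, h * t ^ 2 - t * u = -h * u ^ 2 + h * (t - u) ^ 2 := by
      intro t; linear_combination (t * u) * h21
    calc ∑ t : ZMod p, ψp p (h * t ^ 2 - t * u)
        = ∑ t : ZMod p, ψp p (-h * u ^ 2) * ψp p (h * (t - u) ^ 2) := by
          refine Finset.sum_congr rfl fun t _ => ?_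
          rw [harg t, AddChar.map_add_eq_mul]
      _ = ψp p (-h * u ^ 2) * ∑ t : ZMod p, ψp p (h * (t - u) ^ 2) := (Finset.mul_sum _ _ _).symm
      _ = ψp p (-h * u ^ 2) * G' := by
          rw [hG']
          congr 1
          exact Fintype.sum_equiv (Equiv.subRight u) _ _ fun t => rfl
  -- assemble
  calc (p : ℂ) * ∑ x : Fin n → ZMod p, ψp p (esym2 p n x)
      = ∑ x : Fin n → ZMod p, (p : ℂ) * ψp p (esym2 p n x) := Finset.mul_sum _ _ _
    _ = ∑ x : Fin n → ZMod p, ∑ t : ZMod p, ∑ u : ZMod p,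
          ψp p ((h * t ^ 2 - h * ∑ i, x i ^ 2) + ((∑ i, x i) - t) * u) :=
        Finset.sum_congr rfl fun x _ => key1 x
    _ = ∑ t : ZMod p, ∑ u : ZMod p, ∑ x : Fin n → ZMod p,
          ψp p ((h * t ^ 2 - h * ∑ i, x i ^ 2) + ((∑ i, x i) - t) * u) := by
        rw [Finset.sum_comm]
        exact Finset.sum_congr rfl fun t _ => Finset.sum_comm
    _ = ∑ t : ZMod p, ∑ u : ZMod p,
          ψp p (h * t ^ 2 - t * u) * (ψp p (h * u ^ 2) * G) ^ n := by
        exact Finset.sum_congr rfl fun t _ => Finset.sum_congr rfl fun u _ => inner_x t u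
    _ = ∑ u : ZMod p, ∑ t : ZMod p,
          ψp p (h * t ^ 2 - t * u) * (ψp p (h * u ^ 2) * G) ^ n := Finset.sum_comm
    _ = ∑ u : ZMod p, (ψp p (-h * u ^ 2) * G') * (ψp p (h * u ^ 2) * G) ^ n := by
        refine Finset.sum_congr rfl fun u _ => ?_
        rw [← Finset.sum_mul, inner_t u]
    _ = G ^ n * G' * ∑ u : ZMod p, ψp p (((n : ZMod p) - 1) * h * u ^ 2) := by
        rw [Finset.mul_sum]
        refine Finset.sum_congr rfl fun u _ => ?_
        have hpow : ψp p (h * u ^ 2) ^ n = ψp p ((n : ZMod p) * (h * u ^ 2)) := by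
          rw [← AddChar.map_nsmul_eq_pow, nsmul_eq_mul]
        rw [mul_pow, hpow]
        have hmul : ψp p (-h * u ^ 2) * ψp p ((n : ZMod p) * (h * u ^ 2))
            = ψp p (((n : ZMod p) - 1) * h * u ^ 2) := by
          rw [← AddChar.map_add_eq_mul]
          congr 1
          ring
        calc ψp p (-h * u ^ 2) * G' * (ψp p ((n : ZMod p) * (h * u ^ 2)) * G ^ n)
            = G ^ n * G' * (ψp p (-h * u ^ 2) * ψp p ((n : ZMod p) * (h * u ^ 2))) := by ring
          _ = G ^ n * G' * ψp p (((n : ZMod p) - 1) * h * u ^ 2) := by rw [hmul]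

end Esym2Recurrence

open Esym2Recurrence

/-- Let `p` be an odd prime.  The sequence `{S_{F_p}(σ_{n,2})}` satisfies the homogeneous
linear recurrence with characteristic polynomial `X^{2p} − ((−1)/p)·p^p`, i.e.
`S_{F_p}(σ_{n,2}) = ((−1)/p)·p^p · S_{F_p}(σ_{n−2p,2})` for all `n ≥ 2p + 2`,
where `((−1)/p)` is the Legendre symbol. -/
theorem esym2_expSum_linear_recurrence (p : ℕ) [Fact p.Prime] (hodd : p ≠ 2)
    (n : ℕ) (hn : 2 * p + 2 ≤ n) :
    expSumP p n (esym2 p n) =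
      (legendreSym p (-1) : ℂ) * (p : ℂ) ^ p * expSumP p (n - 2 * p) (esym2 p (n - 2 * p)) := by
  classical
  have hp : p.Prime := Fact.out
  set m := n - 2 * p with hm
  have hmn : n = m + 2 * p := by omega
  have htwo : (2 : ZMod p) ≠ 0 :=
    Ring.two_ne_zero (by rw [ZMod.ringChar_zmod_n]; exact hodd)
  have hinv : (-(2 : ZMod p)⁻¹) ≠ 0 := neg_ne_zero.2 (inv_ne_zero htwo)
  set G : ℂ := ∑ y : ZMod p, ψp p (-(2 : ZMod p)⁻¹ * y ^ 2) with hG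
  -- χp p (-1) and its basic properties
  set ε : ℂ := χp p (-1) with hε
  have hsq : ∀ c : ZMod p, c ≠ 0 → χp p c * χp p c = 1 := by
    intro c hc
    have h := quadraticChar_sq_one hc
    have : ((quadraticChar (ZMod p) c : ℤ) : ℂ) * ((quadraticChar (ZMod p) c : ℤ) : ℂ) = 1 := by
      rw [← Int.cast_mul, ← sq, h]; norm_num
    simpa [χp, MulChar.ringHomComp_apply, eq_intCast] using this
  have hε2 : ε * ε = 1 := hsq (-1) (neg_ne_zero.2 one_ne_zero)
  have hleg : (legendreSym p (-1) : ℂ) = ε := by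
    rw [hε, legendreSym]
    push_cast
    simp [χp, MulChar.ringHomComp_apply, eq_intCast]
  -- G² = ε * p
  have hGsq : G ^ 2 = ε * p := by
    rw [hG, sum_psi_sq hodd hinv, mul_pow, gauss_sq hodd, sq,
      hsq _ hinv, one_mul, hε]
  -- G^(2p) = ε * p^p
  have hG2p : G ^ (2 * p) = ε * (p : ℂ) ^ p := by
    obtain ⟨k, hk⟩ := hp.odd_of_ne_two hodd
    calc G ^ (2 * p) = (G ^ 2) ^ p := by rw [← pow_mul]
      _ = ε ^ p * (p : ℂ) ^ p := by rw [hGsq, mul_pow]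
      _ = ε * (p : ℂ) ^ p := by
          congr 1
          rw [hk, pow_succ, pow_mul, sq, hε2, one_pow, one_mul]
  -- same Q for n and m
  have hcast : ((n : ZMod p)) = ((m : ZMod p)) := by
    rw [hmn]; push_cast [ZMod.natCast_self]; ring
  have h1 := master hodd n
  have h2 := master hodd m
  rw [hcast] at h1
  have hcomb : (p : ℂ) * ∑ x : Fin n → ZMod p, ψp p (esym2 p n x)
      = G ^ (2 * p) * ((p : ℂ) * ∑ x : Fin m → ZMod p, ψp p (esym2 p m x)) := by
    rw [h1, h2, hmn]
    ring
  have hpne : (p : ℂ) ≠ 0 := Nat.cast_ne_zero.2 hp.ne_zero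
  have hfinal : ∑ x : Fin n → ZMod p, ψp p (esym2 p n x)
      = G ^ (2 * p) * ∑ x : Fin m → ZMod p, ψp p (esym2 p m x) := by
    apply mul_left_cancel₀ hpne
    rw [hcomb]; ring
  rw [expSum_eq, expSum_eq, hfinal, hG2p, hleg]
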